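/- SHSMs can be exponentially more succinct than restricted SHSMs: there exist a constant c > 0, a polynomial p, and for every n ∈ ℕ an SHSM M_n with |M_n| ≤ p(n), such that every restricted SHSM M' whose flat Kripke structure (M')^F is isomorphic to M_n^F satisfies |M'| ≥ 2^{cn}. -/

import Mathlib

/-- A Scope-dependent Hierarchical State Machine over `AP`.  Machines are indexed by
`Fin h` (index `i` represents the `(i+1)`-st machine `M_{i+1}` of the paper); the
expansion map returns `none` on nodes and `some j` on a box expanding to machine `j`,
with `j < i` (only lower-indexed machines).  Edges are plain edges `(u,v)` (from nodes)
and box edges `((u,z),v)` (from a box `u` through an output vertex `z`). -/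
structure SHSM (AP : Type) where
  h : ℕ
  hpos : 0 < h
  V : Fin h → Type
  Vfin : ∀ i, Fintype (V i)
  init : ∀ i, V i
  out : ∀ i, Set (V i)
  label : ∀ i, V i → Set AP
  expand : ∀ i, V i → Option (Fin h)
  expand_lt : ∀ i u j, expand i u = some j → (j : ℕ) < (i : ℕ)
  init_node : ∀ i, expand i (init i) = none
  out_node : ∀ i, ∀ z ∈ out i, expand i z = none
  Eplain : ∀ i, V i → V i → Prop
  Ebox : ∀ i, V i → ∀ j, V j → V i → Prop
  Eplain_node : ∀ i u v, Eplain i u v → expand i u = none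
  Ebox_ok : ∀ i u j z v, Ebox i u j z v → expand i u = some j ∧ z ∈ out j

namespace SHSM

variable {AP : Type}

instance (M : SHSM AP) (i : Fin M.h) : Fintype (M.V i) := M.Vfin i

/-- The disjoint union of all vertex sets of `M`. -/
abbrev Vt (M : SHSM AP) : Type := Σ i : Fin M.h, M.V i

/-- The index of the top-level machine `M_h`. -/
def top (M : SHSM AP) : Fin M.h := ⟨M.h - 1, Nat.sub_lt M.hpos Nat.one_pos⟩

/-- `x` is a node (it does not expand to any machine). -/
def IsNode (M : SHSM AP) (x : M.Vt) : Prop := M.expand x.1 x.2 = none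

/-- The expansion step relation: `u_{ℓ+1} ∈ V_{expand(u_ℓ)}`. -/
def stepRel (M : SHSM AP) : M.Vt → M.Vt → Prop :=
  fun a b => M.expand a.1 a.2 = some b.1

/-- A well-formed sequence of vertices `u₁ … u_m` (`m ≥ 1`) with
`u_{ℓ+1} ∈ V_{expand(u_ℓ)}`. -/
def WFSeq (M : SHSM AP) (l : List M.Vt) : Prop :=
  l ≠ [] ∧ l.Chain' M.stepRel

/-- A well-formed sequence which starts in machine `j` and ends at a node.
For `j = M.top` these are exactly the complete well-formed sequences, i.e. the
states of the flat Kripke structure `M^F`; for general `j` they are the states of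
the flat Kripke structure of the sub-SHSM `(M₁,…,M_j)`. -/
def CompleteAt (M : SHSM AP) (j : Fin M.h) (l : List M.Vt) : Prop :=
  M.WFSeq l ∧ (∃ x, l.head? = some x ∧ x.1 = j) ∧ (∃ x, l.getLast? = some x ∧ M.IsNode x)

/-- A complete well-formed sequence: a state of the flat Kripke structure `M^F`. -/
def Complete (M : SHSM AP) (l : List M.Vt) : Prop :=
  M.CompleteAt M.top l

/-- The transition relation of the flat Kripke structure `M^F`, given by the four kinds
of moves induced by the edges of `M`: node to node, node to box, box to node (through an
output vertex), and box to box. -/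
def FlatTrans (M : SHSM AP) (X Y : List M.Vt) : Prop :=
  (∃ (p : List M.Vt) (i : Fin M.h) (a b : M.V i),
      X = p ++ [⟨i, a⟩] ∧ Y = p ++ [⟨i, b⟩] ∧
      M.Eplain i a b ∧ M.expand i b = none) ∨
  (∃ (p : List M.Vt) (i : Fin M.h) (a b : M.V i) (j : Fin M.h),
      X = p ++ [⟨i, a⟩] ∧ Y = p ++ [⟨i, b⟩, ⟨j, M.init j⟩] ∧
      M.Eplain i a b ∧ M.expand i b = some j) ∨
  (∃ (p : List M.Vt) (i : Fin M.h) (a : M.V i) (j : Fin M.h) (z : M.V j) (v : M.V i),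
      X = p ++ [⟨i, a⟩, ⟨j, z⟩] ∧ Y = p ++ [⟨i, v⟩] ∧
      M.Ebox i a j z v ∧ M.expand i v = none) ∨
  (∃ (p : List M.Vt) (i : Fin M.h) (a : M.V i) (j : Fin M.h) (z : M.V j) (b : M.V i)
      (j' : Fin M.h),
      X = p ++ [⟨i, a⟩, ⟨j, z⟩] ∧ Y = p ++ [⟨i, b⟩, ⟨j', M.init j'⟩] ∧
      M.Ebox i a j z b ∧ M.expand i b = some j')

/-- The label of a state of `M^F`: the union of the labels of the vertices occurring
in the sequence. -/
def flatLabel (M : SHSM AP) (l : List M.Vt) : Set AP :=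
  {p | ∃ x ∈ l, p ∈ M.label x.1 x.2}

/-- The initial state `⟨in_h⟩` of `M^F`. -/
def initSeq (M : SHSM AP) : List M.Vt := [⟨M.top, M.init M.top⟩]

lemma initSeq_complete (M : SHSM AP) : M.Complete M.initSeq :=
  ⟨⟨by simp [initSeq], by exact List.isChain_singleton _⟩,
   ⟨⟨M.top, M.init M.top⟩, rfl, rfl⟩,
   ⟨⟨M.top, M.init M.top⟩, by simp [initSeq], M.init_node M.top⟩⟩

/-- The states of the flat Kripke structure `M^F`. -/
def States (M : SHSM AP) : Type := {l : List M.Vt // M.Complete l}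

/-- `M` is an HSM: boxes carry no atomic propositions. -/
def IsHSM (M : SHSM AP) : Prop :=
  ∀ i (u : M.V i), M.expand i u ≠ none → M.label i u = ∅

/-- The size of `M`: total number of vertices plus total number of edges. -/
noncomputable def size (M : SHSM AP) : ℕ :=
  Fintype.card M.Vt
  + {e : Σ i : Fin M.h, M.V i × M.V i | M.Eplain e.1 e.2.1 e.2.2}.ncard
  + {e : Σ (i : Fin M.h) (j : Fin M.h), M.V i × M.V j × M.V i |
       M.Ebox e.1 e.2.2.1 e.2.1 e.2.2.2.1 e.2.2.2.2}.ncard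

/-- `expand⁺`: machine `j` belongs to the iterated expansion of vertex `u`. -/
inductive InExpandPlus (M : SHSM AP) : M.Vt → Fin M.h → Prop where
  | base {i : Fin M.h} {u : M.V i} {j : Fin M.h} :
      M.expand i u = some j → InExpandPlus M ⟨i, u⟩ j
  | step {i : Fin M.h} {u : M.V i} {j : Fin M.h} (u' : M.V j) {j' : Fin M.h} :
      M.expand i u = some j → InExpandPlus M ⟨j, u'⟩ j' → InExpandPlus M ⟨i, u⟩ j'

/-- `u` is an ancestor of `v`: `v` lies in a machine belonging to `expand⁺(u)`. -/
def Ancestor (M : SHSM AP) (u v : M.Vt) : Prop :=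
  M.InExpandPlus u v.1

/-- A restricted SHSM: labels of a vertex and of any of its descendants are disjoint. -/
def Restricted (M : SHSM AP) : Prop :=
  ∀ u v : M.Vt, M.Ancestor u v → M.label u.1 u.2 ∩ M.label v.1 v.2 = ∅

end SHSM

/-- The flat Kripke structures of `M` and `M'` are isomorphic: a bijection of states
mapping the initial state to the initial state and preserving transitions and labels. -/
def FlatIso {AP : Type} (M M' : SHSM AP) : Prop :=
  ∃ f : M.States ≃ M'.States,
    f ⟨M.initSeq, M.initSeq_complete⟩ = ⟨M'.initSeq, M'.initSeq_complete⟩ ∧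
    (∀ X Y : M.States, M.FlatTrans X.1 Y.1 ↔ M'.FlatTrans (f X).1 (f Y).1) ∧
    (∀ X : M.States, M.flatLabel X.1 = M'.flatLabel (f X).1)

/-!
In a restricted SHSM a transition of the flat structure keeps a common prefix of the call
stack, whose vertices are ancestors of the vertices it discards and so share no propositions
with them. The set of propositions lost by the transition is therefore determined by the
edge inducing it, and a restricted SHSM has at least as many edges as its flat structure has
distinct lost sets.

In `Ladder.machine n` each machine `i + 1` has two boxes calling machine `i`, one of them
labelled by a bit proposition, and the exit of machine `0` carries all `n` bit propositions.
Each `x : Fin n → Bool` selects a call stack; returning from machine `0` there loses exactly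
the bits where `x` is false, so the flat structure has `2 ^ n` distinct lost sets, while
`Ladder.machine n` has `O(n ^ 2)` vertices and edges.
-/

namespace SHSM

variable {AP : Type} (M : SHSM AP)

lemma flatLabel_append (l₁ l₂ : List M.Vt) :
    M.flatLabel (l₁ ++ l₂) = M.flatLabel l₁ ∪ M.flatLabel l₂ := by
  ext a
  simp [flatLabel, or_and_right, exists_or]

lemma flatLabel_cons (u : M.Vt) (l : List M.Vt) :
    M.flatLabel (u :: l) = M.label u.1 u.2 ∪ M.flatLabel l := by
  ext a
  simp [flatLabel]

lemma flatLabel_nil : M.flatLabel [] = ∅ := by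
  simp [flatLabel]

variable {M}

lemma InExpandPlus.trans {u : M.Vt} {k j : Fin M.h} {v : M.V k} (huv : M.InExpandPlus u k)
    (hv : M.InExpandPlus ⟨k, v⟩ j) : M.InExpandPlus u j := by
  induction huv with
  | base h => exact .step _ h hv
  | step u' h _ ih => exact .step u' h (ih hv)

lemma Ancestor.trans {u v w : M.Vt} (huv : M.Ancestor u v) (hvw : M.Ancestor v w) :
    M.Ancestor u w :=
  InExpandPlus.trans huv hvw

lemma pairwise_ancestor_of_isChain {l : List M.Vt} (h : l.IsChain M.stepRel) :
    l.Pairwise M.Ancestor :=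
  have : Trans M.Ancestor M.Ancestor M.Ancestor := ⟨Ancestor.trans⟩
  List.isChain_iff_pairwise.mp (h.imp fun _ _ => InExpandPlus.base)

lemma Restricted.disjoint_flatLabel (hR : M.Restricted) {p s : List M.Vt}
    (h : (p ++ s).IsChain M.stepRel) : Disjoint (M.flatLabel p) (M.flatLabel s) := by
  have hanc := (List.pairwise_append.mp (pairwise_ancestor_of_isChain h)).2.2
  rw [Set.disjoint_left]
  rintro a ⟨u, hu, hau⟩ ⟨v, hv, hav⟩
  exact (hR u v (hanc u hu v hv)).subset ⟨hau, hav⟩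

lemma Restricted.flatLabel_append_diff (hR : M.Restricted) {p s : List M.Vt}
    (h : (p ++ s).IsChain M.stepRel) (t : List M.Vt) :
    M.flatLabel (p ++ s) \ M.flatLabel (p ++ t) = M.flatLabel s \ M.flatLabel t := by
  have hps := hR.disjoint_flatLabel h
  ext a
  have hpa := @Set.disjoint_left.mp hps a
  simp only [flatLabel_append, Set.mem_sdiff, Set.mem_union]
  tauto

variable (M)

def plainEdges : Set (Σ i : Fin M.h, M.V i × M.V i) :=
  {e | M.Eplain e.1 e.2.1 e.2.2}

def boxEdges : Set (Σ (i : Fin M.h) (j : Fin M.h), M.V i × M.V j × M.V i) :=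
  {e | M.Ebox e.1 e.2.2.1 e.2.1 e.2.2.2.1 e.2.2.2.2}

abbrev Edge : Type := M.plainEdges ⊕ M.boxEdges

variable {M}

/-- The suffix of a state that an edge leaves: its source node, or its source box
followed by the exit it is taken through. -/
def Edge.source : M.Edge → List M.Vt
  | .inl e => [⟨e.1.1, e.1.2.1⟩]
  | .inr e => [⟨e.1.1, e.1.2.2.1⟩, ⟨e.1.2.1, e.1.2.2.2.1⟩]

def Edge.target : M.Edge → M.Vt
  | .inl e => ⟨e.1.1, e.1.2.2⟩
  | .inr e => ⟨e.1.1, e.1.2.2.2.2⟩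

/-- The suffix of a state on entering `v`: `v` itself, followed by the initial vertex of
the machine it expands to if `v` is a box. -/
def entrySeq (v : M.Vt) : List M.Vt :=
  match M.expand v.1 v.2 with
  | none => [v]
  | some j => [v, ⟨j, M.init j⟩]

def Edge.droppedLabels (e : M.Edge) : Set AP :=
  M.flatLabel e.source \ M.flatLabel (M.entrySeq e.target)

variable (M)

def droppedLabelSets : Set (Set AP) :=
  {D | ∃ X Y : M.States, M.FlatTrans X.1 Y.1 ∧ M.flatLabel X.1 \ M.flatLabel Y.1 = D}

lemma size_eq_card_add_card_edge : M.size = Fintype.card M.Vt + Nat.card M.Edge := by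
  rw [size, Nat.card_sum, Nat.card_coe_set_eq, Nat.card_coe_set_eq, add_assoc]
  rfl

lemma size_le_of_card_le (m : ℕ) (hm : ∀ i, Fintype.card (M.V i) ≤ m) :
    M.size ≤ M.h * m + M.h * m ^ 2 + M.h ^ 2 * m ^ 3 := by
  have hVt : Fintype.card M.Vt ≤ M.h * m := by
    simpa [Fintype.card_sigma] using Finset.sum_le_card_nsmul Finset.univ _ _ fun i _ => hm i
  have hplain : M.plainEdges.ncard ≤ M.h * m ^ 2 := by
    refine (Set.ncard_le_card _).trans ?_
    simp only [Nat.card_eq_fintype_card, Fintype.card_sigma, Fintype.card_prod]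
    simpa [sq] using Finset.sum_le_card_nsmul Finset.univ _ _ fun i _ =>
      Nat.mul_le_mul (hm i) (hm i)
  have hbox : M.boxEdges.ncard ≤ M.h ^ 2 * m ^ 3 := by
    refine (Set.ncard_le_card _).trans ?_
    simp only [Nat.card_eq_fintype_card, Fintype.card_sigma, Fintype.card_prod]
    calc ∑ i, ∑ j, Fintype.card (M.V i) * (Fintype.card (M.V j) * Fintype.card (M.V i))
        ≤ ∑ _i : Fin M.h, ∑ _j : Fin M.h, m * (m * m) := by
          gcongr with i _ j _ <;> exact hm _
      _ = M.h ^ 2 * m ^ 3 := by simp; ring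
  unfold size
  exact Nat.add_le_add (Nat.add_le_add hVt hplain) hbox

variable {M}

lemma FlatTrans.exists_edge {X Y : List M.Vt} (h : M.FlatTrans X Y) :
    ∃ (p : List M.Vt) (e : M.Edge), X = p ++ e.source ∧ Y = p ++ M.entrySeq e.target := by
  rcases h with ⟨p, i, a, b, rfl, rfl, he, hb⟩ | ⟨p, i, a, b, j, rfl, rfl, he, hb⟩ |
    ⟨p, i, a, j, z, v, rfl, rfl, he, hv⟩ | ⟨p, i, a, j, z, b, j', rfl, rfl, he, hb⟩
  · exact ⟨p, .inl ⟨⟨i, a, b⟩, he⟩, rfl, by simp [Edge.target, entrySeq, hb]⟩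
  · exact ⟨p, .inl ⟨⟨i, a, b⟩, he⟩, rfl, by simp [Edge.target, entrySeq, hb]⟩
  · exact ⟨p, .inr ⟨⟨i, j, a, z, v⟩, he⟩, rfl, by simp [Edge.target, entrySeq, hv]⟩
  · exact ⟨p, .inr ⟨⟨i, j, a, z, b⟩, he⟩, rfl, by simp [Edge.target, entrySeq, hb]⟩

lemma Restricted.droppedLabelSets_subset_range (hR : M.Restricted) :
    M.droppedLabelSets ⊆ Set.range fun e : M.Edge => e.droppedLabels := by
  rintro D ⟨X, Y, hT, rfl⟩
  obtain ⟨p, e, hX, hY⟩ := hT.exists_edge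
  have hchain : (p ++ e.source).IsChain M.stepRel := hX ▸ X.2.1.2
  exact ⟨e, by rw [hX, hY, hR.flatLabel_append_diff hchain]; rfl⟩

lemma Restricted.card_le_size (hR : M.Restricted) {ι : Type*} [Finite ι] {D : ι → Set AP}
    (hD : Function.Injective D) (hDM : ∀ i, D i ∈ M.droppedLabelSets) :
    Nat.card ι ≤ M.size := by
  have hrange : Set.range D ⊆ Set.range fun e : M.Edge => e.droppedLabels := by
    rintro _ ⟨i, rfl⟩
    exact hR.droppedLabelSets_subset_range (hDM i)
  calc Nat.card ι = Nat.card (Set.range D) := (Nat.card_range_of_injective hD).symm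
    _ ≤ Nat.card (Set.range fun e : M.Edge => e.droppedLabels) :=
      Nat.card_mono (Set.finite_range _) hrange
    _ ≤ Nat.card M.Edge := Finite.card_range_le _
    _ ≤ M.size := by rw [size_eq_card_add_card_edge]; omega

end SHSM

lemma FlatIso.droppedLabelSets_subset {AP : Type} {M M' : SHSM AP} (h : FlatIso M M') :
    M'.droppedLabelSets ⊆ M.droppedLabelSets := by
  obtain ⟨f, -, htrans, hlabel⟩ := h
  rintro D ⟨X, Y, hT, rfl⟩
  refine ⟨f.symm X, f.symm Y, (htrans _ _).mpr (by simpa using hT), ?_⟩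
  simp [hlabel]

namespace Ladder

inductive Vtx
  | entry
  | exit
  | box (b : Bool)
  deriving Fintype

variable (n : ℕ)

def expand (i : Fin (n + 2)) : Vtx → Option (Fin (n + 2))
  | .box _ => if (i : ℕ) = 0 then none else some ⟨i - 1, by omega⟩
  | _ => none

/-- `box true` in machine `n + 1 - k` carries the proposition `k`, the position of that
machine in the call stacks `bitPrefix x`; the exit of machine `0` carries all of them. -/
def label (i : Fin (n + 2)) : Vtx → Set ℕ
  | .exit => if (i : ℕ) = 0 then Set.Iio n else ∅
  | .box true => {n + 1 - i}
  | _ => ∅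

def machine : SHSM ℕ where
  h := n + 2
  hpos := by omega
  V _ := Vtx
  Vfin _ := inferInstance
  init _ := .entry
  out _ := {.exit}
  label := label n
  expand := expand n
  expand_lt i u j h := by
    cases u <;> simp only [expand, reduceCtorEq] at h
    split_ifs at h with hi
    cases h
    exact Nat.sub_lt (Nat.pos_of_ne_zero hi) one_pos
  init_node _ := rfl
  out_node _ _ h := by rw [Set.mem_singleton_iff.mp h]; rfl
  Eplain _ u v := u = .entry ∧ v ≠ .entry
  Ebox i u j z v := expand n i u = some j ∧ z = .exit ∧ v = .exit
  Eplain_node _ _ _ h := by rw [h.1]; rfl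
  Ebox_ok _ _ _ _ _ h := ⟨h.1, h.2.1⟩

variable {n}

lemma stepRel_iff {u v : (machine n).Vt} :
    (machine n).stepRel u v ↔ (∃ b, u.2 = Vtx.box b) ∧ (u.1 : ℕ) = v.1 + 1 := by
  obtain ⟨i, _ | _ | b⟩ := u <;> simp only [SHSM.stepRel, machine, expand]
  · simp
  · simp
  · split_ifs with hi <;> simp [Fin.ext_iff] <;> omega

def bitPrefix (x : Fin n → Bool) : List (machine n).Vt :=
  List.ofFn fun k => ⟨(⟨n + 1 - k, by omega⟩ : Fin (n + 2)), Vtx.box (x k)⟩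

lemma isChain_bitPrefix_append (x : Fin n → Bool) {u : (machine n).Vt}
    {t : List (machine n).Vt} (hu : (u.1 : ℕ) = 1) (ht : (u :: t).IsChain (machine n).stepRel) :
    (bitPrefix x ++ u :: t).IsChain (machine n).stepRel := by
  refine List.isChain_append.mpr ⟨?_, ht, ?_⟩
  · exact List.isChain_ofFn.mpr fun k hk => stepRel_iff.mpr ⟨⟨_, rfl⟩, by simp; omega⟩
  · intro a ha b hb
    cases n with
    | zero => simp [bitPrefix] at ha
    | succ m =>
      rw [bitPrefix, List.ofFn_succ_last, List.getLast?_concat, Option.mem_some_iff] at ha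
      rw [List.head?_cons, Option.mem_some_iff] at hb
      subst ha hb
      exact stepRel_iff.mpr ⟨⟨_, rfl⟩, by simp; omega⟩

lemma complete_bitPrefix_append (x : Fin n → Bool) {u : (machine n).Vt}
    {t : List (machine n).Vt} (hu : (u.1 : ℕ) = 1) (ht : (u :: t).IsChain (machine n).stepRel)
    (hlast : (machine n).IsNode ((u :: t).getLast (List.cons_ne_nil u t))) :
    (machine n).Complete (bitPrefix x ++ u :: t) := by
  refine ⟨⟨by simp, isChain_bitPrefix_append x hu ht⟩, ?_, ⟨_, ?_, hlast⟩⟩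
  · cases n with
    | zero => exact ⟨u, by simp [bitPrefix], Fin.ext hu⟩
    | succ m =>
      exact ⟨_, by rw [bitPrefix, List.ofFn_succ]; rfl, Fin.ext (by simp [SHSM.top, machine])⟩
  · rw [List.getLast?_append_of_ne_nil _ (List.cons_ne_nil u t), List.getLast?_eq_some_getLast]

def fullState (x : Fin n → Bool) : List (machine n).Vt :=
  bitPrefix x ++ [⟨(⟨1, by omega⟩ : Fin (n + 2)), Vtx.box false⟩,
    ⟨(⟨0, by omega⟩ : Fin (n + 2)), Vtx.exit⟩]

def bitState (x : Fin n → Bool) : List (machine n).Vt :=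
  bitPrefix x ++ [⟨(⟨1, by omega⟩ : Fin (n + 2)), Vtx.exit⟩]

lemma complete_fullState (x : Fin n → Bool) : (machine n).Complete (fullState x) :=
  complete_bitPrefix_append x rfl (List.isChain_pair.mpr (stepRel_iff.mpr ⟨⟨_, rfl⟩, rfl⟩)) rfl

lemma complete_bitState (x : Fin n → Bool) : (machine n).Complete (bitState x) :=
  complete_bitPrefix_append x rfl (List.isChain_singleton _) rfl

lemma flatTrans_fullState_bitState (x : Fin n → Bool) :
    (machine n).FlatTrans (fullState x) (bitState x) :=
  Or.inr <| Or.inr <| Or.inl ⟨bitPrefix x, _, _, _, _, _, rfl, rfl, ⟨rfl, rfl, rfl⟩, rfl⟩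

lemma flatLabel_bitPrefix (x : Fin n → Bool) :
    (machine n).flatLabel (bitPrefix x) = Fin.val '' {k | x k = true} := by
  ext a
  simp only [SHSM.flatLabel, bitPrefix, List.mem_ofFn, Set.mem_image, Set.mem_ofPred_eq]
  constructor
  · rintro ⟨_, ⟨k, rfl⟩, ha⟩
    refine ⟨k, ?_⟩
    cases hk : x k <;> simp [hk, machine, label] at ha ⊢
    omega
  · rintro ⟨k, hk, rfl⟩
    exact ⟨_, ⟨k, rfl⟩, by simp [hk, machine, label]; omega⟩

lemma flatLabel_fullState (x : Fin n → Bool) :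
    (machine n).flatLabel (fullState x) = Set.Iio n := by
  rw [fullState, SHSM.flatLabel_append, flatLabel_bitPrefix, SHSM.flatLabel_cons,
    SHSM.flatLabel_cons, SHSM.flatLabel_nil]
  simp [machine, label]
  exact fun k _ => k.isLt

lemma flatLabel_bitState (x : Fin n → Bool) :
    (machine n).flatLabel (bitState x) = Fin.val '' {k | x k = true} := by
  rw [bitState, SHSM.flatLabel_append, flatLabel_bitPrefix, SHSM.flatLabel_cons,
    SHSM.flatLabel_nil]
  simp [machine, label]

def droppedBits (x : Fin n → Bool) : Set ℕ :=
  Set.Iio n \ Fin.val '' {k | x k = true}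

lemma droppedBits_mem_droppedLabelSets (x : Fin n → Bool) :
    droppedBits x ∈ (machine n).droppedLabelSets :=
  ⟨⟨_, complete_fullState x⟩, ⟨_, complete_bitState x⟩, flatTrans_fullState_bitState x, by
    rw [flatLabel_fullState, flatLabel_bitState, droppedBits]⟩

variable (n) in
lemma droppedBits_injective : Function.Injective (droppedBits (n := n)) := by
  intro x y h
  funext k
  have hk := congrArg (k.val ∈ ·) h
  simpa [droppedBits, Fin.val_inj] using hk

lemma machine_size_le :
    (machine n).size ≤ (n + 2) * 4 + (n + 2) * 4 ^ 2 + (n + 2) ^ 2 * 4 ^ 3 :=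
  (machine n).size_le_of_card_le 4 fun _ => le_of_eq rfl

end Ladder

/-- SHSMs can be exponentially more succinct than restricted SHSMs: there are a constant
`c > 0`, a polynomial `p`, and SHSMs `M_n` of size at most `p(n)` such that every
restricted SHSM whose flat Kripke structure is isomorphic to `M_n^F` has size at least
`2^{cn}`. -/
theorem shsm_exp_succinct_vs_restricted :
    ∃ (AP : Type) (c : ℝ), 0 < c ∧
      ∃ (p : Polynomial ℕ) (Mfam : ℕ → SHSM AP),
        ∀ n : ℕ, (Mfam n).size ≤ p.eval n ∧
          ∀ M' : SHSM AP, M'.Restricted → FlatIso M' (Mfam n) →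
            (2 : ℝ) ^ (c * n) ≤ (M'.size : ℝ) := by
  open Polynomial in
  refine ⟨ℕ, 1, one_pos, (X + 2) * 4 + (X + 2) * 4 ^ 2 + (X + 2) ^ 2 * 4 ^ 3, Ladder.machine,
    fun n => ⟨by simpa using Ladder.machine_size_le, fun M' hR hiso => ?_⟩⟩
  have h := hR.card_le_size (Ladder.droppedBits_injective n)
    fun x => hiso.droppedLabelSets_subset (Ladder.droppedBits_mem_droppedLabelSets x)
  rw [Nat.card_fun, Nat.card_eq_fintype_card, Fintype.card_bool, Nat.card_eq_fintype_card,
    Fintype.card_fin] at h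
  rw [one_mul, Real.rpow_natCast]
  exact_mod_cast h
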